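/- The Rényi divergence of order α > 1 between two multivariate Gaussians N(μ₁, Σ₁) and N(μ₂, Σ₂) on R^K, with Σ₁, Σ₂ positive definite and Σ_α := (1−α)Σ₁ + αΣ₂ positive definite, equals (α/2)(μ₁−μ₂)ᵀ Σ_α⁻¹ (μ₁−μ₂) − (1/(2(α−1))) · log( det(Σ_α) / (det(Σ₁)^{1−α} det(Σ₂)^α) ). -/

import Mathlib

open Matrix MeasureTheory
section AuxRenyi
open Real
open scoped MatrixOrder

lemma sqrt_pow_nat (a : ℝ) (ha : 0 ≤ a) (n : ℕ) : Real.sqrt a ^ n = Real.sqrt (a ^ n) := by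
  rw [Real.sqrt_eq_rpow, Real.sqrt_eq_rpow, ← Real.rpow_natCast (a ^ ((1:ℝ)/2)) n,
    ← Real.rpow_mul ha, ← Real.rpow_natCast a n, ← Real.rpow_mul ha]
  ring_nf

lemma gauss_std (K : ℕ) :
    ∫ y : Fin K → ℝ, Real.exp (-(1/2) * (y ⬝ᵥ y)) = Real.sqrt ((2 * π) ^ K) := by
  have h : ∀ y : Fin K → ℝ, Real.exp (-(1/2) * (y ⬝ᵥ y)) = ∏ i, Real.exp (-(1/2) * (y i)^2) := by
    intro y
    rw [← Real.exp_sum]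
    congr 1
    simp [dotProduct, Finset.mul_sum, sq]
  simp_rw [h]
  rw [volume_pi, integral_fintype_prod_eq_pow (ι := Fin K) (fun x : ℝ => Real.exp (-(1/2) * x^2))]
  have : ∫ x : ℝ, Real.exp (-(1/2) * x^2) = Real.sqrt (2 * π) := by
    rw [integral_gaussian, div_div_eq_mul_div, div_one]
    ring_nf
  rw [this, Fintype.card_fin, sqrt_pow_nat _ (by positivity)]

lemma gauss_quad {K : ℕ} {A : Matrix (Fin K) (Fin K) ℝ} (hA : A.PosDef) :
    ∫ x : Fin K → ℝ, Real.exp (-(1/2) * (x ⬝ᵥ A *ᵥ x)) = Real.sqrt ((2 * π) ^ K / A.det) := by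
  set B := CFC.sqrt A with hBdef
  have hBps : B.PosSemidef := (CFC.sqrt_nonneg A).posSemidef
  have hBB : B * B = A := CFC.sqrt_mul_sqrt_self A hA.posSemidef.nonneg
  have hBsymm : Bᵀ = B := by
    rw [← Matrix.conjTranspose_eq_transpose_of_trivial]; exact hBps.isHermitian.eq
  have hdetB_sq : B.det ^ 2 = A.det := by rw [← hBB, det_mul, sq]
  have hdetB_nonneg : 0 ≤ B.det := by
    rw [hBps.isHermitian.det_eq_prod_eigenvalues]
    exact Finset.prod_nonneg fun i _ => hBps.eigenvalues_nonneg i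
  have hdetB : B.det = Real.sqrt A.det := by
    rw [← hdetB_sq, Real.sqrt_sq hdetB_nonneg]
  have hdetB_pos : 0 < B.det := by
    rw [hdetB]; exact Real.sqrt_pos.mpr hA.det_pos
  have hquad : ∀ x : Fin K → ℝ, x ⬝ᵥ A *ᵥ x = (B *ᵥ x) ⬝ᵥ (B *ᵥ x) := by
    intro x
    rw [← hBB, ← mulVec_mulVec, dotProduct_mulVec x B]
    nth_rewrite 1 [← hBsymm]
    rw [vecMul_transpose]
  simp_rw [hquad]
  have hmap : Measure.map (⇑(toLin' B)) volume
      = ENNReal.ofReal |B.det⁻¹| • (volume : Measure (Fin K → ℝ)) :=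
    Real.map_matrix_volume_pi_eq_smul_volume_pi hdetB_pos.ne'
  have key : ∫ y : Fin K → ℝ, Real.exp (-(1/2) * (y ⬝ᵥ y)) ∂(Measure.map (⇑(toLin' B)) volume)
      = ∫ x : Fin K → ℝ, Real.exp (-(1/2) * ((B *ᵥ x) ⬝ᵥ (B *ᵥ x))) := by
    rw [integral_map]
    · simp [toLin'_apply]
    · exact (toLin' B).continuous_of_finiteDimensional.aemeasurable
    · apply Continuous.aestronglyMeasurable
      exact Real.continuous_exp.comp (by continuity)
  rw [← key, hmap, integral_smul_measure, gauss_std, ENNReal.toReal_ofReal (by positivity),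
    abs_of_nonneg (by positivity), smul_eq_mul, hdetB, div_eq_mul_inv,
    Real.sqrt_mul (by positivity), Real.sqrt_inv]
  ring


variable {n : Type*} [Fintype n] [DecidableEq n]

lemma transpose_eq_self_of_posDef {A : Matrix n n ℝ} (hA : A.PosDef) : Aᵀ = A := by
  rw [← conjTranspose_eq_transpose_of_trivial]; exact hA.1.eq

omit [DecidableEq n] in
lemma posDef_smul {c : ℝ} {A : Matrix n n ℝ} (hc : 0 < c) (hA : A.PosDef) : (c • A).PosDef := by
  refine Matrix.PosDef.of_dotProduct_mulVec_pos ?_ (fun x hx => ?_)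
  · unfold Matrix.IsHermitian
    rw [conjTranspose_smul, hA.1.eq]
    simp
  · rw [smul_mulVec, dotProduct_smul]
    exact mul_pos hc (hA.dotProduct_mulVec_pos hx)

omit [DecidableEq n] in
lemma dot_conj (P A : Matrix n n ℝ) (x : n → ℝ) :
    x ⬝ᵥ (Pᵀ * A * P) *ᵥ x = (P *ᵥ x) ⬝ᵥ A *ᵥ (P *ᵥ x) := by
  rw [Matrix.mul_assoc, ← mulVec_mulVec, dotProduct_mulVec, vecMul_transpose, mulVec_mulVec]

lemma posDef_conj {A P : Matrix n n ℝ} (hA : A.PosDef) (hP : IsUnit P.det) :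
    (Pᵀ * A * P).PosDef := by
  refine Matrix.PosDef.of_dotProduct_mulVec_pos ?_ (fun x hx => ?_)
  · unfold Matrix.IsHermitian
    rw [conjTranspose_eq_transpose_of_trivial, transpose_mul, transpose_mul,
      transpose_transpose, transpose_eq_self_of_posDef hA, Matrix.mul_assoc]
  · have hinj : Function.Injective (P.mulVec) :=
      Matrix.mulVec_injective_iff_isUnit.mpr ((isUnit_iff_isUnit_det _).2 hP)
    have hPx : P *ᵥ x ≠ 0 := fun h => hx (hinj (by simpa using h))
    have := hA.dotProduct_mulVec_pos hPx
    simp only [star_trivial] at this ⊢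
    rwa [dot_conj]

omit [DecidableEq n] in
lemma dot_symm {M : Matrix n n ℝ} (hM : Mᵀ = M) (u v : n → ℝ) :
    u ⬝ᵥ M *ᵥ v = v ⬝ᵥ M *ᵥ u := by
  rw [dotProduct_mulVec]
  nth_rewrite 1 [← hM]
  rw [vecMul_transpose, dotProduct_comm]

omit [DecidableEq n] in
omit [DecidableEq n] in
lemma mulVec_dot (M : Matrix n n ℝ) (d y : n → ℝ) :
    (M *ᵥ d) ⬝ᵥ y = d ⬝ᵥ Mᵀ *ᵥ y := by
  rw [← vecMul_transpose, ← dotProduct_mulVec]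

lemma quad_expand {M : Matrix n n ℝ} (hM : Mᵀ = M) (x v : n → ℝ) :
    (x - v) ⬝ᵥ M *ᵥ (x - v)
      = x ⬝ᵥ M *ᵥ x - 2 * (v ⬝ᵥ M *ᵥ x) + v ⬝ᵥ M *ᵥ v := by
  simp only [mulVec_sub, sub_dotProduct, dotProduct_sub]
  rw [dot_symm hM x v]
  ring



end AuxRenyi


/-- Density of the multivariate Gaussian `N(μ, S)` on `ℝ^K` (for positive definite `S`). -/
noncomputable def gaussianDensity {K : ℕ} (μ : Fin K → ℝ) (S : Matrix (Fin K) (Fin K) ℝ)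
    (x : Fin K → ℝ) : ℝ :=
  (Real.sqrt ((2 * Real.pi) ^ K * S.det))⁻¹ *
    Real.exp (-(1 / 2) * ((x - μ) ⬝ᵥ S⁻¹.mulVec (x - μ)))

/-- Rényi divergence of order `α` between two probability densities `p, q` on `ℝ^K`
(w.r.t. Lebesgue measure): `D_α(p‖q) = (α−1)⁻¹ log ∫ p^α q^{1−α}`. -/
noncomputable def renyiDivDensity {K : ℕ} (α : ℝ) (p q : (Fin K → ℝ) → ℝ) : ℝ :=
  (α - 1)⁻¹ * Real.log (∫ x, p x ^ α * q x ^ (1 - α))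

/-- Closed form of the Rényi divergence of order `α > 1` between the Gaussians `N(μ₁, Σ₁)`
and `N(μ₂, Σ₂)`, when `Σ_α = (1−α)Σ₁ + αΣ₂` is positive definite. -/
theorem stmt_8 {K : ℕ} (α : ℝ) (hα : 1 < α)
    (μ1 μ2 : Fin K → ℝ) (S1 S2 Sa : Matrix (Fin K) (Fin K) ℝ)
    (h1 : S1.PosDef) (h2 : S2.PosDef)
    (hdef : Sa = (1 - α) • S1 + α • S2) (hpd : Sa.PosDef) :
    renyiDivDensity α (gaussianDensity μ1 S1) (gaussianDensity μ2 S2)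
      = α / 2 * ((μ1 - μ2) ⬝ᵥ Sa⁻¹.mulVec (μ1 - μ2))
        - (1 / (2 * (α - 1))) * Real.log (Sa.det / (S1.det ^ (1 - α) * S2.det ^ α)) := by
  have hαpos : (0:ℝ) < α := by linarith
  have hα1 : α - 1 > 0 := by linarith
  have h1u : IsUnit S1.det := h1.det_pos.ne'.isUnit
  have h2u : IsUnit S2.det := h2.det_pos.ne'.isUnit
  have hau : IsUnit Sa.det := hpd.det_pos.ne'.isUnit
  have hS1 : S1 * S1⁻¹ = 1 := mul_nonsing_inv _ h1u
  have hS1' : S1⁻¹ * S1 = 1 := nonsing_inv_mul _ h1u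
  have hS2 : S2 * S2⁻¹ = 1 := mul_nonsing_inv _ h2u
  have hS2' : S2⁻¹ * S2 = 1 := nonsing_inv_mul _ h2u
  have hSa : Sa * Sa⁻¹ = 1 := mul_nonsing_inv _ hau
  have hSa' : Sa⁻¹ * Sa = 1 := nonsing_inv_mul _ hau
  set A : Matrix (Fin K) (Fin K) ℝ := α • S1⁻¹ + (1 - α) • S2⁻¹ with hAdef
  have hA2 : A = S2⁻¹ * Sa * S1⁻¹ := by
    rw [hdef, Matrix.mul_add, Matrix.add_mul, Matrix.mul_smul, Matrix.smul_mul,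
      Matrix.mul_smul, Matrix.smul_mul, Matrix.mul_assoc S2⁻¹ S1 S1⁻¹, hS1,
      Matrix.mul_one, hS2', Matrix.one_mul, hAdef]
    module
  have hA1 : A = S1⁻¹ * Sa * S2⁻¹ := by
    rw [hdef, Matrix.mul_add, Matrix.add_mul, Matrix.mul_smul, Matrix.smul_mul,
      Matrix.mul_smul, Matrix.smul_mul, Matrix.mul_assoc S1⁻¹ S2 S2⁻¹, hS2,
      Matrix.mul_one, hS1', Matrix.one_mul, hAdef]
    module
  have hAS1 : A * (S1 * Sa⁻¹) = S2⁻¹ := by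
    rw [hA2]
    simp only [Matrix.mul_assoc]
    rw [← Matrix.mul_assoc S1⁻¹ S1 Sa⁻¹, hS1', Matrix.one_mul, hSa, Matrix.mul_one]
  have hAS2 : A * (S2 * Sa⁻¹) = S1⁻¹ := by
    rw [hA1]
    simp only [Matrix.mul_assoc]
    rw [← Matrix.mul_assoc S2⁻¹ S2 Sa⁻¹, hS2', Matrix.one_mul, hSa, Matrix.mul_one]
  have hMeq : S1 * Sa⁻¹ * S2 = α⁻¹ • S1 + (α⁻¹ * (α - 1)) • (S1 * Sa⁻¹ * S1) := by
    have h : α • (S1 * Sa⁻¹ * S2) = S1 + (α - 1) • (S1 * Sa⁻¹ * S1) := by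
      have hs2 : α • S2 = Sa - (1 - α) • S1 := by rw [hdef]; abel
      calc α • (S1 * Sa⁻¹ * S2) = S1 * Sa⁻¹ * (α • S2) := by
            rw [Matrix.mul_smul]
        _ = S1 * Sa⁻¹ * Sa - (1 - α) • (S1 * Sa⁻¹ * S1) := by
            rw [hs2, Matrix.mul_sub, Matrix.mul_smul]
        _ = S1 + (α - 1) • (S1 * Sa⁻¹ * S1) := by
            rw [Matrix.mul_assoc, hSa', Matrix.mul_one]
            module
    calc S1 * Sa⁻¹ * S2 = α⁻¹ • (α • (S1 * Sa⁻¹ * S2)) := by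
          rw [smul_smul, inv_mul_cancel₀ hαpos.ne', one_smul]
      _ = α⁻¹ • (S1 + (α - 1) • (S1 * Sa⁻¹ * S1)) := by rw [h]
      _ = α⁻¹ • S1 + (α⁻¹ * (α - 1)) • (S1 * Sa⁻¹ * S1) := by
          rw [smul_add, smul_smul]
  -- positive definiteness of A
  have hS1t : S1ᵀ = S1 := by
    rw [← conjTranspose_eq_transpose_of_trivial]; exact h1.1.eq
  have hMpd : (S1 * Sa⁻¹ * S2).PosDef := by
    rw [hMeq]
    refine Matrix.PosDef.add (posDef_smul (by positivity) h1) (posDef_smul ?_ ?_)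
    · positivity
    · nth_rewrite 1 [← hS1t]
      exact posDef_conj hpd.inv h1u
  have hAinv : A = (S1 * Sa⁻¹ * S2)⁻¹ := by
    rw [Matrix.mul_inv_rev, Matrix.mul_inv_rev,
      nonsing_inv_nonsing_inv _ hau, hA2, Matrix.mul_assoc]
  have hApd : A.PosDef := by rw [hAinv]; exact hMpd.inv
  have hAt : Aᵀ = A := transpose_eq_self_of_posDef hApd
  have hdetA : A.det = Sa.det / (S1.det * S2.det) := by
    have e1 : S1.det ≠ 0 := h1.det_pos.ne'
    have e2 : S2.det ≠ 0 := h2.det_pos.ne'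
    rw [hA2, det_mul, det_mul, det_nonsing_inv, det_nonsing_inv,
      eq_div_iff (mul_ne_zero e1 e2)]
    simp only [Ring.inverse_eq_inv']
    field_simp
  have hS1it : S1⁻¹ᵀ = S1⁻¹ := transpose_eq_self_of_posDef h1.inv
  have hS2it : S2⁻¹ᵀ = S2⁻¹ := transpose_eq_self_of_posDef h2.inv
  have hSait : Sa⁻¹ᵀ = Sa⁻¹ := transpose_eq_self_of_posDef hpd.inv
  have hs2 : α • S2 = Sa - (1 - α) • S1 := by rw [hdef]; abel
  set d : Fin K → ℝ := μ2 - μ1 with hd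
  set m : Fin K → ℝ := μ1 + (1 - α) • ((S1 * Sa⁻¹) *ᵥ d) with hm
  have hμ2 : μ2 = μ1 + d := by rw [hd]; abel
  have hm1 : m - μ1 = (1 - α) • ((S1 * Sa⁻¹) *ᵥ d) := by rw [hm]; abel
  have hmat2 : α • (S2 * Sa⁻¹) = 1 - (1 - α) • (S1 * Sa⁻¹) := by
    rw [← Matrix.smul_mul, hs2, Matrix.sub_mul, hSa, Matrix.smul_mul]
  have hm2 : m - μ2 = α • ((S2 * Sa⁻¹) *ᵥ (-d)) := by
    rw [← smul_mulVec, hmat2, Matrix.sub_mulVec, Matrix.one_mulVec,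
      smul_mulVec, Matrix.mulVec_neg, hm, hμ2]
    module
  have hAm : A *ᵥ m = α • (S1⁻¹ *ᵥ μ1) + (1 - α) • (S2⁻¹ *ᵥ μ2) := by
    rw [hm, Matrix.mulVec_add, Matrix.mulVec_smul, mulVec_mulVec, hAS1, hAdef,
      Matrix.add_mulVec, smul_mulVec, smul_mulVec, hμ2, Matrix.mulVec_add]
    module
  -- the constant
  set c : ℝ := α * (1 - α) * (d ⬝ᵥ Sa⁻¹ *ᵥ d) with hc
  -- pointwise quadratic identity
  have hxA : ∀ x : Fin K → ℝ, x ⬝ᵥ A *ᵥ x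
      = α * (x ⬝ᵥ S1⁻¹ *ᵥ x) + (1 - α) * (x ⬝ᵥ S2⁻¹ *ᵥ x) := by
    intro x
    rw [hAdef, Matrix.add_mulVec, smul_mulVec, smul_mulVec,
      dotProduct_add, dotProduct_smul, dotProduct_smul, smul_eq_mul, smul_eq_mul]
  have hmA : ∀ x : Fin K → ℝ, m ⬝ᵥ A *ᵥ x
      = α * (μ1 ⬝ᵥ S1⁻¹ *ᵥ x) + (1 - α) * (μ2 ⬝ᵥ S2⁻¹ *ᵥ x) := by
    intro x
    rw [dot_symm hAt m x, hAm, dotProduct_add, dotProduct_smul, dotProduct_smul,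
      smul_eq_mul, smul_eq_mul, dot_symm hS1it x μ1, dot_symm hS2it x μ2]
  have hquad0 : ∀ x : Fin K → ℝ,
      α * ((x - μ1) ⬝ᵥ S1⁻¹ *ᵥ (x - μ1)) + (1 - α) * ((x - μ2) ⬝ᵥ S2⁻¹ *ᵥ (x - μ2))
        = (x - m) ⬝ᵥ A *ᵥ (x - m)
          + (α * (μ1 ⬝ᵥ S1⁻¹ *ᵥ μ1) + (1 - α) * (μ2 ⬝ᵥ S2⁻¹ *ᵥ μ2) - m ⬝ᵥ A *ᵥ m) := by
    intro x
    rw [quad_expand hS1it, quad_expand hS2it, quad_expand hAt, hxA x, hmA x, hmA m]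
    ring
  -- value of the constant
  have hceval : α * (μ1 ⬝ᵥ S1⁻¹ *ᵥ μ1) + (1 - α) * (μ2 ⬝ᵥ S2⁻¹ *ᵥ μ2) - m ⬝ᵥ A *ᵥ m
      = c := by
    have hu : ((S1 * Sa⁻¹) *ᵥ d) ⬝ᵥ S1⁻¹ *ᵥ ((S1 * Sa⁻¹) *ᵥ d)
        = d ⬝ᵥ (Sa⁻¹ * S1 * Sa⁻¹) *ᵥ d := by
      rw [mulVec_mulVec, ← Matrix.mul_assoc S1⁻¹ S1 Sa⁻¹, hS1', Matrix.one_mul,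
        mulVec_dot, transpose_mul, hSait, hS1t, mulVec_mulVec]
    have hS2t : S2ᵀ = S2 := by
      rw [← conjTranspose_eq_transpose_of_trivial]; exact h2.1.eq
    have hw : ((S2 * Sa⁻¹) *ᵥ (-d)) ⬝ᵥ S2⁻¹ *ᵥ ((S2 * Sa⁻¹) *ᵥ (-d))
        = d ⬝ᵥ (Sa⁻¹ * S2 * Sa⁻¹) *ᵥ d := by
      rw [Matrix.mulVec_neg, Matrix.mulVec_neg, neg_dotProduct, dotProduct_neg, neg_neg,
        mulVec_mulVec, ← Matrix.mul_assoc S2⁻¹ S2 Sa⁻¹, hS2', Matrix.one_mul,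
        mulVec_dot, transpose_mul, hSait, hS2t, mulVec_mulVec]
    have expand : Sa⁻¹ * Sa * Sa⁻¹
        = (1 - α) • (Sa⁻¹ * S1 * Sa⁻¹) + α • (Sa⁻¹ * S2 * Sa⁻¹) := by
      nth_rewrite 2 [hdef]
      rw [Matrix.mul_add, Matrix.add_mul, Matrix.mul_smul, Matrix.mul_smul,
        Matrix.smul_mul, Matrix.smul_mul]
    have hcomb : (1 - α) • (Sa⁻¹ * S1 * Sa⁻¹) + α • (Sa⁻¹ * S2 * Sa⁻¹) = Sa⁻¹ := by
      rw [← expand, hSa', Matrix.one_mul]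
    have hsplit : d ⬝ᵥ Sa⁻¹ *ᵥ d
        = (1 - α) * (d ⬝ᵥ (Sa⁻¹ * S1 * Sa⁻¹) *ᵥ d)
          + α * (d ⬝ᵥ (Sa⁻¹ * S2 * Sa⁻¹) *ᵥ d) := by
      conv_lhs => rw [← hcomb]
      rw [Matrix.add_mulVec, smul_mulVec, smul_mulVec, dotProduct_add,
        dotProduct_smul, dotProduct_smul, smul_eq_mul, smul_eq_mul]
    have h0 := hquad0 m
    rw [sub_self, zero_dotProduct, zero_add, hm1, hm2] at h0
    simp only [smul_dotProduct, dotProduct_smul, Matrix.mulVec_smul, smul_eq_mul] at h0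
    rw [hu, hw] at h0
    rw [← h0, hc, hsplit]
    ring
  have hquad : ∀ x : Fin K → ℝ,
      α * ((x - μ1) ⬝ᵥ S1⁻¹ *ᵥ (x - μ1)) + (1 - α) * ((x - μ2) ⬝ᵥ S2⁻¹ *ᵥ (x - μ2))
        = (x - m) ⬝ᵥ A *ᵥ (x - m) + c := fun x => by rw [hquad0 x, hceval]
  have h2π : (0:ℝ) < (2 * Real.pi) ^ K := by positivity
  set N1 : ℝ := Real.sqrt ((2 * Real.pi) ^ K * S1.det) with hN1def
  set N2 : ℝ := Real.sqrt ((2 * Real.pi) ^ K * S2.det) with hN2def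
  have hN1 : 0 < N1 := Real.sqrt_pos.mpr (mul_pos h2π h1.det_pos)
  have hN2 : 0 < N2 := Real.sqrt_pos.mpr (mul_pos h2π h2.det_pos)
  set C : ℝ := (N1 ^ α)⁻¹ * (N2 ^ (1 - α))⁻¹ * Real.exp (-(1/2) * c) with hC
  have key : ∀ x : Fin K → ℝ,
      gaussianDensity μ1 S1 x ^ α * gaussianDensity μ2 S2 x ^ (1 - α)
        = C * Real.exp (-(1/2) * ((x - m) ⬝ᵥ A *ᵥ (x - m))) := by
    intro x
    simp only [gaussianDensity, ← hN1def, ← hN2def]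
    rw [Real.mul_rpow (inv_nonneg.mpr hN1.le) (Real.exp_pos _).le,
        Real.mul_rpow (inv_nonneg.mpr hN2.le) (Real.exp_pos _).le,
        Real.inv_rpow hN1.le, Real.inv_rpow hN2.le, ← Real.exp_mul, ← Real.exp_mul, hC]
    have harg : (-(1/2) * ((x - μ1) ⬝ᵥ S1⁻¹ *ᵥ (x - μ1))) * α
        + (-(1/2) * ((x - μ2) ⬝ᵥ S2⁻¹ *ᵥ (x - μ2))) * (1 - α)
        = (-(1/2) * c) + (-(1/2) * ((x - m) ⬝ᵥ A *ᵥ (x - m))) := by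
      linear_combination (-(1:ℝ)/2) * hquad x
    rw [mul_mul_mul_comm, ← Real.exp_add, harg, Real.exp_add]
    ring
  have hVal : (∫ x : Fin K → ℝ, gaussianDensity μ1 S1 x ^ α * gaussianDensity μ2 S2 x ^ (1 - α))
      = C * Real.sqrt ((2 * Real.pi) ^ K / A.det) := by
    simp_rw [key]
    rw [integral_const_mul]
    congr 1
    calc (∫ x : Fin K → ℝ, Real.exp (-(1/2) * ((x - m) ⬝ᵥ A *ᵥ (x - m))))
        = ∫ x : Fin K → ℝ, (fun y : Fin K → ℝ => Real.exp (-(1/2) * (y ⬝ᵥ A *ᵥ y))) (x - m) := rfl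
      _ = ∫ y : Fin K → ℝ, Real.exp (-(1/2) * (y ⬝ᵥ A *ᵥ y)) :=
          integral_sub_right_eq_self (fun y : Fin K → ℝ => Real.exp (-(1/2) * (y ⬝ᵥ A *ᵥ y))) m
      _ = Real.sqrt ((2 * Real.pi) ^ K / A.det) := gauss_quad hApd
  have hRpos : 0 < Real.sqrt ((2 * Real.pi) ^ K / A.det) :=
    Real.sqrt_pos.mpr (div_pos h2π hApd.det_pos)
  have hCpos : 0 < C := by
    rw [hC]
    have := Real.rpow_pos_of_pos hN1 α
    have := Real.rpow_pos_of_pos hN2 (1 - α)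
    positivity
  have hT : (μ1 - μ2) ⬝ᵥ Sa⁻¹ *ᵥ (μ1 - μ2) = d ⬝ᵥ Sa⁻¹ *ᵥ d := by
    have hneg : μ1 - μ2 = -d := by rw [hd]; abel
    rw [hneg, Matrix.mulVec_neg, neg_dotProduct, dotProduct_neg, neg_neg]
  -- logarithms
  have hlogN1 : Real.log N1 = (Real.log ((2 * Real.pi) ^ K) + Real.log S1.det) / 2 := by
    rw [hN1def, Real.log_sqrt (mul_pos h2π h1.det_pos).le, Real.log_mul h2π.ne' h1.det_pos.ne']
  have hlogN2 : Real.log N2 = (Real.log ((2 * Real.pi) ^ K) + Real.log S2.det) / 2 := by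
    rw [hN2def, Real.log_sqrt (mul_pos h2π h2.det_pos).le, Real.log_mul h2π.ne' h2.det_pos.ne']
  have hlogR : Real.log (Real.sqrt ((2 * Real.pi) ^ K / A.det))
      = (Real.log ((2 * Real.pi) ^ K)
          - (Real.log Sa.det - (Real.log S1.det + Real.log S2.det))) / 2 := by
    rw [Real.log_sqrt (div_pos h2π hApd.det_pos).le, Real.log_div h2π.ne' hApd.det_pos.ne',
      hdetA, Real.log_div hpd.det_pos.ne' (mul_pos h1.det_pos h2.det_pos).ne',
      Real.log_mul h1.det_pos.ne' h2.det_pos.ne']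
  have hlogRHS : Real.log (Sa.det / (S1.det ^ (1 - α) * S2.det ^ α))
      = Real.log Sa.det - ((1 - α) * Real.log S1.det + α * Real.log S2.det) := by
    rw [Real.log_div hpd.det_pos.ne'
        (mul_pos (Real.rpow_pos_of_pos h1.det_pos _) (Real.rpow_pos_of_pos h2.det_pos _)).ne',
      Real.log_mul (Real.rpow_pos_of_pos h1.det_pos _).ne'
        (Real.rpow_pos_of_pos h2.det_pos _).ne',
      Real.log_rpow h1.det_pos, Real.log_rpow h2.det_pos]
  have f1 : ((N1 ^ α)⁻¹ : ℝ) ≠ 0 := (inv_pos.mpr (Real.rpow_pos_of_pos hN1 α)).ne'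
  have f2 : ((N2 ^ (1 - α))⁻¹ : ℝ) ≠ 0 := (inv_pos.mpr (Real.rpow_pos_of_pos hN2 (1 - α))).ne'
  simp only [renyiDivDensity]
  rw [hVal, hC,
    Real.log_mul (mul_ne_zero (mul_ne_zero f1 f2) (Real.exp_ne_zero _)) hRpos.ne',
    Real.log_mul (mul_ne_zero f1 f2) (Real.exp_ne_zero _),
    Real.log_mul f1 f2, Real.log_inv, Real.log_inv, Real.log_exp,
    Real.log_rpow hN1, Real.log_rpow hN2, hlogN1, hlogN2, hlogR, hlogRHS, hT, hc]
  field_simp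
  ring
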